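/- Let Γ be a reduced injective LOT that is not prime. Then either Γ contains a complete set of sub-LOTs, or Γ freely decomposes as Γ = Γ_L ∪ Γ_R with Γ_L, Γ_R proper sub-LOTs intersecting in a single vertex. -/

import Mathlib

/-- A labeled oriented graph (LOG): an oriented graph whose edges are labeled by vertices.
A labeled oriented tree (LOT) is a LOG satisfying `IsTree`. -/
structure LOG where
  V : Type
  E : Type
  src : E → V
  tgt : E → V
  lab : E → V

namespace LOG

variable (G : LOG)

/-- Adjacency in the underlying undirected graph. -/
def Adj (v w : G.V) : Prop :=
  ∃ e, (G.src e = v ∧ G.tgt e = w) ∨ (G.src e = w ∧ G.tgt e = v)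

/-- Adjacency using only edges from `S`. -/
def AdjOn (S : Set G.E) (v w : G.V) : Prop :=
  ∃ e ∈ S, (G.src e = v ∧ G.tgt e = w) ∨ (G.src e = w ∧ G.tgt e = v)

/-- The vertices incident to an edge set. -/
def verts (S : Set G.E) : Set G.V := {v | ∃ e ∈ S, G.src e = v ∨ G.tgt e = v}

/-- Connectivity of the subgraph spanned by the edge set `S`. -/
def ConnOn (S : Set G.E) : Prop :=
  ∀ v ∈ G.verts S, ∀ w ∈ G.verts S, Relation.ReflTransGen (G.AdjOn S) v w

/-- The underlying graph is a finite tree: connected, without loops or multiple edges,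
and with one more vertex than edges. -/
def IsTree : Prop :=
  Finite G.V ∧ Finite G.E ∧ Nonempty G.V ∧
  (∀ v w : G.V, Relation.ReflTransGen G.Adj v w) ∧
  (∀ e, G.src e ≠ G.tgt e) ∧
  (∀ e e', ({G.src e, G.tgt e} : Set G.V) = {G.src e', G.tgt e'} → e = e') ∧
  Nat.card G.V = Nat.card G.E + 1

/-- No edge is labeled with one of its own endpoints. -/
def Compressed : Prop := ∀ e, G.lab e ≠ G.src e ∧ G.lab e ≠ G.tgt e

/-- Each vertex occurs as an edge label at most once. -/
def Inj : Prop := ∀ e e', G.lab e = G.lab e' → e = e'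

/-- A leaf (boundary vertex): a vertex incident with exactly one edge. -/
def IsLeaf (v : G.V) : Prop := {e | G.src e = v ∨ G.tgt e = v}.ncard = 1

/-- Every boundary vertex occurs as an edge label. -/
def BoundaryReduced : Prop := ∀ v, G.IsLeaf v → ∃ e, G.lab e = v

/-- Reduced: compressed and boundary reduced. -/
def Reduced : Prop := G.Compressed ∧ G.BoundaryReduced

/-- A sub-LOT, given by a nonempty connected set of edges all of whose labels are
vertices of the subgraph. -/
def IsSubLOT (S : Set G.E) : Prop :=
  S.Nonempty ∧ G.ConnOn S ∧ ∀ e ∈ S, G.lab e ∈ G.verts S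

/-- A proper sub-LOT. -/
def ProperSubLOT (S : Set G.E) : Prop := G.IsSubLOT S ∧ S ≠ Set.univ

/-- A maximal proper sub-LOT. -/
def MaxProperSubLOT (S : Set G.E) : Prop :=
  G.ProperSubLOT S ∧ ∀ T, G.ProperSubLOT T → S ⊆ T → S = T

/-- A prime LOG: one with no proper sub-LOT. -/
def Prime : Prop := ∀ S, ¬ G.ProperSubLOT S

/-- A LOG freely decomposes if it is the union of two proper sub-LOTs meeting in a
single vertex. -/
def FreelyDecomposes : Prop :=
  ∃ (SL SR : Set G.E) (x : G.V), G.ProperSubLOT SL ∧ G.ProperSubLOT SR ∧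
    SL ∪ SR = Set.univ ∧ G.verts SL ∩ G.verts SR = {x}

/-- The map collapsing the vertices of the subgraph spanned by `S` to the vertex `x`. -/
noncomputable def collapseMap (S : Set G.E) (x : G.V) : G.V → G.V :=
  fun v => letI := Classical.dec (v ∈ G.verts S); if v ∈ G.verts S then x else v

/-- The quotient LOG obtained by collapsing the sub-LOT `S` to the vertex `x`
(the vertex of `S` not occurring as an edge label of `S`).  The edges are the edges
outside `S`; endpoints and labels are pushed forward along the collapse map. -/
noncomputable def collapse (S : Set G.E) (x : G.V) : LOG where
  V := G.V
  E := {e : G.E // e ∉ S}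
  src e := G.collapseMap S x (G.src e.1)
  tgt e := G.collapseMap S x (G.tgt e.1)
  lab e := G.collapseMap S x (G.lab e.1)

end LOG

/-- A chain of collapses of maximal proper sub-LOTs (each collapsed to its unique
non-label vertex), starting at the first LOG and ending at the second. -/
inductive CollapseChain : LOG → LOG → Prop
  | refl (G : LOG) : CollapseChain G G
  | step (G H : LOG) (S : Set G.E) (x : G.V)
      (hS : G.MaxProperSubLOT S) (hx : x ∈ G.verts S) (hxlab : ∀ e ∈ S, G.lab e ≠ x)
      (h : CollapseChain (G.collapse S x) H) : CollapseChain G H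

/-- `Γ` contains a complete set of sub-LOTs: iteratively collapsing maximal proper
sub-LOTs ends at a prime injective quotient which is compressed and not just a vertex. -/
def HasCompleteSet (G : LOG) : Prop :=
  ∃ H : LOG, CollapseChain G H ∧ Nonempty H.E ∧ H.Compressed ∧ H.Prime

/-!
Induction on the number of edges. A maximal proper sub-LOT `S` of a reduced injective tree spans
one more vertex than it has edges, so by injectivity exactly one vertex `x` of `S`, its root, is
not the label of an edge of `S`; collapse `S` to `x`. An edge outside `S` labelled `x` cannot
touch `S`: adding it to `S` would give a sub-LOT, by maximality all of `Γ`, whose other endpoint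
would be an unlabelled leaf. Hence the quotient is compressed, and injective with the same labels.
Moreover no proper sub-LOT of the quotient passes through `x`, since it would lift together with
`S` to a larger proper sub-LOT; as `x` lies on every free decomposition, the quotient never
freely decomposes. If the quotient is boundary reduced, it satisfies the hypotheses again and a
complete set for it extends to one for `Γ`. Otherwise its unlabelled leaf must be `x`: exactly
one edge leaves `S` and no edge outside `S` is labelled in `S`, so `Γ = S ∪ Sᶜ` freely
decomposes.

Trees are handled through the count `|V(S)| = |S| + 1` for every connected edge set `S`, which,
unlike connectedness of the whole vertex type, survives collapsing.
-/

namespace LOG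

open Relation Set

variable {G : LOG}

def Touches (A : Set G.V) (e : G.E) : Prop := G.src e ∈ A ∨ G.tgt e ∈ A

def IsAcyclic (G : LOG) : Prop :=
  ∀ S : Set G.E, S.Nonempty → G.ConnOn S → (G.verts S).ncard = S.ncard + 1

section Graph

variable {S T : Set G.E} {e : G.E} {v : G.V}

lemma IsSubLOT.nonempty (hS : G.IsSubLOT S) : S.Nonempty := hS.1

lemma IsSubLOT.connOn (hS : G.IsSubLOT S) : G.ConnOn S := hS.2.1

lemma IsSubLOT.lab_mem_verts (hS : G.IsSubLOT S) (he : e ∈ S) : G.lab e ∈ G.verts S :=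
  hS.2.2 e he

lemma MaxProperSubLOT.isSubLOT (hS : G.MaxProperSubLOT S) : G.IsSubLOT S := hS.1.1

lemma MaxProperSubLOT.ne_univ (hS : G.MaxProperSubLOT S) : S ≠ univ := hS.1.2

lemma src_mem_verts (he : e ∈ S) : G.src e ∈ G.verts S := ⟨e, he, .inl rfl⟩

lemma tgt_mem_verts (he : e ∈ S) : G.tgt e ∈ G.verts S := ⟨e, he, .inr rfl⟩

lemma verts_mono (h : S ⊆ T) : G.verts S ⊆ G.verts T :=
  fun _ ⟨e, he, hv⟩ => ⟨e, h he, hv⟩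

lemma verts_union : G.verts (S ∪ T) = G.verts S ∪ G.verts T := by
  ext v
  simp only [verts, mem_union, mem_ofPred_eq]
  constructor
  · rintro ⟨e, he | he, hv⟩
    exacts [.inl ⟨e, he, hv⟩, .inr ⟨e, he, hv⟩]
  · rintro (⟨e, he, hv⟩ | ⟨e, he, hv⟩)
    exacts [⟨e, .inl he, hv⟩, ⟨e, .inr he, hv⟩]

lemma verts_insert : G.verts (insert e S) = insert (G.src e) (insert (G.tgt e) (G.verts S)) := by
  ext v
  simp only [verts, mem_insert_iff, mem_ofPred_eq]
  constructor
  · rintro ⟨f, rfl | hf, hv | hv⟩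
    exacts [.inl hv.symm, .inr (.inl hv.symm), .inr (.inr ⟨f, hf, .inl hv⟩),
      .inr (.inr ⟨f, hf, .inr hv⟩)]
  · rintro (rfl | rfl | ⟨f, hf, hv⟩)
    exacts [⟨e, .inl rfl, .inl rfl⟩, ⟨e, .inl rfl, .inr rfl⟩, ⟨f, .inr hf, hv⟩]

lemma mem_verts_compl_of_notMem (hv : v ∈ G.verts univ) (hvS : v ∉ G.verts S) :
    v ∈ G.verts Sᶜ := by
  obtain ⟨f, -, hf⟩ := hv
  refine ⟨f, fun hfS => hvS ?_, hf⟩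
  rcases hf with rfl | rfl
  exacts [src_mem_verts hfS, tgt_mem_verts hfS]

lemma AdjOn.mono {a b : G.V} (h : S ⊆ T) (hab : G.AdjOn S a b) : G.AdjOn T a b :=
  let ⟨e, he, hends⟩ := hab
  ⟨e, h he, hends⟩

instance : Std.Symm (G.AdjOn S) := ⟨fun _ _ ⟨e, he, hends⟩ => ⟨e, he, hends.symm⟩⟩

lemma reflTransGen_adjOn_mono {a b : G.V} (h : S ⊆ T) (hab : ReflTransGen (G.AdjOn S) a b) :
    ReflTransGen (G.AdjOn T) a b :=
  ReflTransGen.mono (fun _ _ => AdjOn.mono h) _ _ hab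

lemma reflTransGen_adjOn_symm {a b : G.V} (hab : ReflTransGen (G.AdjOn S) a b) :
    ReflTransGen (G.AdjOn S) b a :=
  Std.Symm.symm _ _ hab

lemma connOn_univ_of_reflTransGen_adj (h : ∀ v w, ReflTransGen G.Adj v w) : G.ConnOn univ :=
  fun v _ w _ => ReflTransGen.mono (fun _ _ ⟨e, hends⟩ => ⟨e, trivial, hends⟩) _ _ (h v w)

lemma verts_univ_of_reflTransGen_adj (h : ∀ v w, ReflTransGen G.Adj v w) (he : Nonempty G.E) :
    G.verts univ = univ := by
  obtain ⟨e⟩ := he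
  refine eq_univ_of_forall fun v => ?_
  rcases (h v (G.src e)).cases_head with rfl | ⟨_, ⟨f, hf⟩, -⟩
  · exact src_mem_verts trivial
  · rcases hf with ⟨hv, -⟩ | ⟨-, hv⟩
    exacts [⟨f, trivial, .inl hv⟩, ⟨f, trivial, .inr hv⟩]

lemma exists_mem_diff_touches (hS : G.ConnOn S) (hTS : T ⊆ S) (hT : T.Nonempty)
    (hST : (S \ T).Nonempty) : ∃ e ∈ S \ T, G.Touches (G.verts T) e := by
  obtain ⟨f, hf⟩ := hST
  obtain ⟨a, ha⟩ : (G.verts T).Nonempty := ⟨_, src_mem_verts hT.some_mem⟩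
  have reach : ∀ b, ReflTransGen (G.AdjOn S) b a →
      b ∈ G.verts T ∨ ∃ e ∈ S \ T, G.Touches (G.verts T) e := by
    intro b hb
    induction hb using ReflTransGen.head_induction_on with
    | refl => exact .inl ha
    | head hstep _ ih =>
      rcases ih with hc | hc
      · obtain ⟨g, hgS, hends⟩ := hstep
        by_cases hgT : g ∈ T
        · rcases hends with ⟨hb, -⟩ | ⟨-, hb⟩
          exacts [.inl ⟨g, hgT, .inl hb⟩, .inl ⟨g, hgT, .inr hb⟩]
        · refine .inr ⟨g, ⟨hgS, hgT⟩, ?_⟩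
          rcases hends with ⟨-, rfl⟩ | ⟨rfl, -⟩
          exacts [.inr hc, .inl hc]
      · exact .inr hc
  rcases reach _ (hS _ (src_mem_verts hf.1) a (verts_mono hTS ha)) with h | h
  exacts [⟨f, hf, .inl h⟩, h]

lemma connOn_insert (hS : G.ConnOn S) (he : G.Touches (G.verts S) e) :
    G.ConnOn (insert e S) := by
  obtain ⟨p, hp, hpe⟩ : ∃ p ∈ G.verts S, G.src e = p ∨ G.tgt e = p := by
    rcases he with h | h
    exacts [⟨_, h, .inl rfl⟩, ⟨_, h, .inr rfl⟩]
  have hst : ReflTransGen (G.AdjOn (insert e S)) (G.src e) (G.tgt e) :=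
    .single ⟨e, mem_insert e S, .inl ⟨rfl, rfl⟩⟩
  have hto : ∀ v ∈ G.verts (insert e S), ReflTransGen (G.AdjOn (insert e S)) v p := by
    intro v hv
    rw [verts_insert] at hv
    rcases hv with rfl | rfl | hv
    · rcases hpe with rfl | rfl
      exacts [.refl, hst]
    · rcases hpe with rfl | rfl
      exacts [reflTransGen_adjOn_symm hst, .refl]
    · exact reflTransGen_adjOn_mono (subset_insert e S) (hS v hv p hp)
  exact fun v hv w hw => (hto v hv).trans (reflTransGen_adjOn_symm (hto w hw))

lemma ncard_verts_insert_le (he : G.Touches (G.verts S) e) :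
    (G.verts (insert e S)).ncard ≤ (G.verts S).ncard + 1 := by
  rw [verts_insert]
  rcases he with h | h
  · rw [insert_eq_of_mem (mem_insert_of_mem _ h)]
    exact ncard_insert_le _ _
  · rw [insert_comm, insert_eq_of_mem (mem_insert_of_mem _ h)]
    exact ncard_insert_le _ _

lemma ncard_verts_le_add [Finite G.V] [Finite G.E] (hS : G.ConnOn S) (hTS : T ⊆ S)
    (hT : T.Nonempty) :
    (G.verts S).ncard ≤ (G.verts T).ncard + (S \ T).ncard := by
  induction h : (S \ T).ncard generalizing T with
  | zero =>
    rw [ncard_eq_zero, sdiff_eq_empty] at h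
    simpa using ncard_le_ncard (verts_mono h)
  | succ n ih =>
    obtain ⟨e, he, htouch⟩ :=
      exists_mem_diff_touches hS hTS hT (nonempty_of_ncard_ne_zero (by omega))
    have hdiff : S \ insert e T = (S \ T) \ {e} := by
      ext f
      simp only [mem_sdiff, mem_insert_iff, mem_singleton_iff]
      tauto
    have := ih (insert_subset he.1 hTS) (insert_nonempty e T)
      (by rw [hdiff, ncard_sdiff_singleton_of_mem he, h]; rfl)
    have := ncard_verts_insert_le htouch
    omega

lemma isAcyclic_of_isTree (hT : G.IsTree) : G.IsAcyclic := by
  obtain ⟨hV, hE, -, hconn, -, -, hcard⟩ := hT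
  intro S ⟨e, he⟩ hS
  have hupper : (G.verts S).ncard ≤ S.ncard + 1 := by
    have h1 := ncard_verts_le_add hS (singleton_subset_iff.2 he) (singleton_nonempty e)
    have h2 : (G.verts {e}).ncard ≤ 2 := by
      rw [← insert_empty_eq, verts_insert]
      refine (ncard_insert_le _ _).trans (Nat.succ_le_succ ((ncard_insert_le _ _).trans ?_))
      simp [verts]
    have h3 := ncard_sdiff_singleton_add_one he
    omega
  have hlower :=
    ncard_verts_le_add (connOn_univ_of_reflTransGen_adj hconn) (subset_univ S) ⟨e, he⟩
  rw [verts_univ_of_reflTransGen_adj hconn ⟨e⟩, ncard_univ, ← compl_eq_univ_sdiff] at hlower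
  have := ncard_add_ncard_compl S
  omega

lemma IsAcyclic.tgt_notMem_verts [Finite G.E] (hA : G.IsAcyclic) (hSne : S.Nonempty)
    (hS : G.ConnOn S) (he : e ∉ S) (hsrc : G.src e ∈ G.verts S) : G.tgt e ∉ G.verts S := by
  intro htgt
  have hverts : G.verts (insert e S) = G.verts S := by
    rw [verts_insert, insert_eq_of_mem htgt, insert_eq_of_mem hsrc]
  have := hA _ (insert_nonempty e S) (connOn_insert hS (.inl hsrc))
  rw [hverts, hA S hSne hS, ncard_insert_of_notMem he] at this
  omega

lemma IsAcyclic.verts_inter_verts_compl_eq_singleton [Finite G.E] (hA : G.IsAcyclic)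
    (hconn : G.ConnOn univ) (hSne : S.Nonempty) (hS : G.ConnOn S) (hSu : S ≠ univ)
    (hunique : ∃ e₀, ∀ f ∉ S, G.Touches (G.verts S) f → f = e₀) :
    ∃ w, G.verts S ∩ G.verts Sᶜ = {w} := by
  refine exists_eq_singleton_iff_nonempty_subsingleton.2 ⟨?_, ?_⟩
  · obtain ⟨f, hf⟩ := (ne_univ_iff_exists_notMem S).1 hSu
    obtain ⟨e, he, htouch⟩ :=
      exists_mem_diff_touches hconn (subset_univ S) hSne ⟨f, trivial, hf⟩
    rcases htouch with h | h
    exacts [⟨_, h, src_mem_verts he.2⟩, ⟨_, h, tgt_mem_verts he.2⟩]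
  · obtain ⟨e₀, he₀⟩ := hunique
    have hend : ∀ u ∈ G.verts S ∩ G.verts Sᶜ,
        e₀ ∉ S ∧ (G.src e₀ = u ∨ G.tgt e₀ = u) := by
      rintro u ⟨huS, f, hf, hfu⟩
      obtain rfl := he₀ f hf (hfu.imp (fun h => by rwa [h]) (fun h => by rwa [h]))
      exact ⟨hf, hfu⟩
    intro u hu u' hu'
    obtain ⟨he₀S, hu₀⟩ := hend u hu
    have hboth := hA.tgt_notMem_verts hSne hS he₀S
    rcases hu₀ with rfl | rfl <;> rcases (hend u' hu').2 with h | h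
    · exact h
    · exact (hboth hu.1 (h ▸ hu'.1)).elim
    · exact (hboth (h ▸ hu'.1) hu.1).elim
    · exact h

lemma isSubLOT_compl (hlab_mem : ∀ e, G.lab e ∈ G.verts univ) (hSu : S ≠ univ)
    (hconn : G.ConnOn Sᶜ) (hlab : ∀ f ∉ S, G.lab f ∉ G.verts S) : G.IsSubLOT Sᶜ :=
  ⟨(ne_univ_iff_exists_notMem S).1 hSu, hconn,
    fun f hf => mem_verts_compl_of_notMem (hlab_mem f) (hlab f hf)⟩

lemma freelyDecomposes_of_compl (hS : G.ProperSubLOT S) (hSc : G.IsSubLOT Sᶜ) {w : G.V}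
    (hw : G.verts S ∩ G.verts Sᶜ = {w}) : G.FreelyDecomposes := by
  obtain ⟨e, he⟩ := hS.1.nonempty
  have hSc_ne : Sᶜ ≠ univ := fun h => (h ▸ mem_univ e : e ∈ Sᶜ) he
  exact ⟨S, Sᶜ, w, hS, ⟨hSc, hSc_ne⟩, union_compl_self S, hw⟩

lemma exists_maxProperSubLOT [Finite G.E] (hp : ¬ G.Prime) : ∃ S, G.MaxProperSubLOT S := by
  obtain ⟨S, hS⟩ := not_forall_not.1 hp
  obtain ⟨T, hT, hmax⟩ := (toFinite {S | G.ProperSubLOT S}).exists_maximalFor id _ ⟨S, hS⟩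
  exact ⟨T, hT, fun U hU hTU => hTU.antisymm (hmax hU hTU)⟩

end Graph

section Collapse

variable {S : Set G.E} {x u v w : G.V}

lemma collapseMap_of_mem (hv : v ∈ G.verts S) : G.collapseMap S x v = x := if_pos hv

lemma collapseMap_of_notMem (hv : v ∉ G.verts S) : G.collapseMap S x v = v := if_neg hv

lemma collapseMap_eq_root_iff (hx : x ∈ G.verts S) :
    G.collapseMap S x v = x ↔ v ∈ G.verts S := by
  by_cases hv : v ∈ G.verts S
  · simp [collapseMap_of_mem hv, hv]
  · simp only [collapseMap_of_notMem hv, hv, iff_false]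
    rintro rfl
    exact hv hx

lemma collapseMap_eq_iff_of_ne_root (hvx : v ≠ x) :
    G.collapseMap S x u = v ↔ u = v ∧ v ∉ G.verts S := by
  by_cases hu : u ∈ G.verts S
  · rw [collapseMap_of_mem hu]
    exact ⟨fun h => (hvx h.symm).elim, fun ⟨h, hv⟩ => (hv (h ▸ hu)).elim⟩
  · rw [collapseMap_of_notMem hu]
    exact ⟨fun h => ⟨h, h ▸ hu⟩, And.left⟩

lemma collapseMap_eq_collapseMap_iff (hx : x ∈ G.verts S) :
    G.collapseMap S x u = G.collapseMap S x w ↔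
      u = w ∨ u ∈ G.verts S ∧ w ∈ G.verts S := by
  by_cases hu : u ∈ G.verts S <;> by_cases hw : w ∈ G.verts S
  · simp [collapseMap_of_mem hu, collapseMap_of_mem hw, hu, hw]
  · rw [collapseMap_of_mem hu, collapseMap_of_notMem hw]
    grind
  · rw [collapseMap_of_notMem hu, collapseMap_of_mem hw]
    grind
  · simp [collapseMap_of_notMem hu, collapseMap_of_notMem hw, hu]

lemma collapse_touches_root_iff (hx : x ∈ G.verts S) (e : (G.collapse S x).E) :
    (G.collapse S x).Touches {x} e ↔ G.Touches (G.verts S) e.1 :=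
  or_congr (collapseMap_eq_root_iff hx) (collapseMap_eq_root_iff hx)

lemma verts_collapse (S' : Set (G.collapse S x).E) :
    (G.collapse S x).verts S' = G.collapseMap S x '' G.verts (Subtype.val '' S') := by
  ext v
  constructor
  · rintro ⟨e, he, hv | hv⟩
    exacts [⟨_, src_mem_verts ⟨e, he, rfl⟩, hv⟩,
      ⟨_, tgt_mem_verts ⟨e, he, rfl⟩, hv⟩]
  · rintro ⟨u, ⟨_, ⟨e, he, rfl⟩, hu | hu⟩, rfl⟩
    exacts [⟨e, he, .inl (congrArg (G.collapseMap S x) hu)⟩,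
      ⟨e, he, .inr (congrArg (G.collapseMap S x) hu)⟩]

lemma verts_collapse_univ : (G.collapse S x).verts univ = G.collapseMap S x '' G.verts Sᶜ := by
  rw [verts_collapse]
  congr 2
  ext e
  exact ⟨fun ⟨e', _, h⟩ => h ▸ e'.2, fun he => ⟨⟨e, he⟩, trivial, rfl⟩⟩

lemma verts_collapse_subset (hx : x ∈ G.verts S) (S' : Set (G.collapse S x).E) :
    (G.collapse S x).verts S' ⊆ G.verts (Subtype.val '' S' ∪ S) := by
  rw [verts_collapse, verts_union]
  rintro _ ⟨u, hu, rfl⟩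
  by_cases huS : u ∈ G.verts S
  · rw [collapseMap_of_mem huS]
    exact .inr hx
  · rw [collapseMap_of_notMem huS]
    exact .inl hu

lemma ncard_image_collapseMap [Finite G.V] (hx : x ∈ G.verts S) {A : Set G.V}
    (hA : G.verts S ⊆ A) :
    (G.collapseMap S x '' A).ncard + (G.verts S).ncard = A.ncard + 1 := by
  have himage : G.collapseMap S x '' A = insert x (A \ G.verts S) := by
    ext v
    constructor
    · rintro ⟨u, hu, rfl⟩
      by_cases huS : u ∈ G.verts S
      · exact .inl (collapseMap_of_mem huS)
      · rw [collapseMap_of_notMem huS]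
        exact .inr ⟨hu, huS⟩
    · rintro (rfl | ⟨hv, hvS⟩)
      exacts [⟨_, hA hx, collapseMap_of_mem hx⟩, ⟨v, hv, collapseMap_of_notMem hvS⟩]
  rw [himage, ncard_insert_of_notMem fun h => h.2 hx, add_right_comm,
    ncard_sdiff_add_ncard_of_subset hA]

lemma connOn_of_collapse {S' : Set (G.collapse S x).E} {T : Set G.E}
    (hconn : (G.collapse S x).ConnOn S') (hS'T : Subtype.val '' S' ⊆ T)
    (hmaps : MapsTo (G.collapseMap S x) (G.verts T) ((G.collapse S x).verts S'))
    (glue : ∀ u ∈ G.verts T, ∀ w ∈ G.verts T,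
      G.collapseMap S x u = G.collapseMap S x w → ReflTransGen (G.AdjOn T) u w) :
    G.ConnOn T := by
  suffices lift : ∀ {a b}, ReflTransGen ((G.collapse S x).AdjOn S') a b →
      ∀ u ∈ G.verts T, ∀ w ∈ G.verts T,
        G.collapseMap S x u = a → G.collapseMap S x w = b → ReflTransGen (G.AdjOn T) u w from
    fun u hu w hw => lift (hconn _ (hmaps hu) _ (hmaps hw)) u hu w hw rfl rfl
  intro a b hab
  induction hab with
  | refl => exact fun u hu w hw hua hwa => glue u hu w hw (hua.trans hwa.symm)
  | tail _ hbc ih =>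
    intro u hu w hw hua hwc
    obtain ⟨e, he, hends⟩ := hbc
    have heT : e.1 ∈ T := hS'T ⟨e, he, rfl⟩
    rcases hends with ⟨hs, ht⟩ | ⟨hs, ht⟩
    · exact ((ih u hu _ (src_mem_verts heT) hua hs).tail ⟨e.1, heT, .inl ⟨rfl, rfl⟩⟩).trans
        (glue _ (tgt_mem_verts heT) w hw (ht.trans hwc.symm))
    · exact ((ih u hu _ (tgt_mem_verts heT) hua ht).tail ⟨e.1, heT, .inr ⟨rfl, rfl⟩⟩).trans
        (glue _ (src_mem_verts heT) w hw (hs.trans hwc.symm))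

lemma reflTransGen_adjOn_of_collapseMap_eq {T : Set G.E} (hx : x ∈ G.verts S) (hS : G.ConnOn S)
    (hST : S ⊆ T) (h : G.collapseMap S x u = G.collapseMap S x w) :
    ReflTransGen (G.AdjOn T) u w := by
  rcases (collapseMap_eq_collapseMap_iff hx).1 h with rfl | ⟨hu, hw⟩
  exacts [.refl, reflTransGen_adjOn_mono hST (hS u hu w hw)]

lemma collapseMap_injOn {A : Set G.V} (hx : x ∈ G.verts S) (hA : (A ∩ G.verts S).Subsingleton) :
    InjOn (G.collapseMap S x) A := by
  intro u hu w hw h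
  rcases (collapseMap_eq_collapseMap_iff hx).1 h with rfl | ⟨hu', hw'⟩
  exacts [rfl, hA ⟨hu, hu'⟩ ⟨hw, hw'⟩]

lemma mapsTo_collapseMap_verts_union {S' : Set (G.collapse S x).E}
    (hxS' : x ∈ (G.collapse S x).verts S') :
    MapsTo (G.collapseMap S x) (G.verts (Subtype.val '' S' ∪ S)) ((G.collapse S x).verts S') := by
  intro u hu
  rw [verts_union] at hu
  rcases hu with hu | hu
  · rw [verts_collapse]
    exact mem_image_of_mem _ hu
  · rw [collapseMap_of_mem hu]
    exact hxS'

lemma connOn_union_of_collapse (hx : x ∈ G.verts S) (hS : G.ConnOn S)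
    {S' : Set (G.collapse S x).E} (hconn : (G.collapse S x).ConnOn S')
    (hxS' : x ∈ (G.collapse S x).verts S') : G.ConnOn (Subtype.val '' S' ∪ S) :=
  connOn_of_collapse hconn subset_union_left (mapsTo_collapseMap_verts_union hxS')
    fun _ _ _ _ => reflTransGen_adjOn_of_collapseMap_eq hx hS subset_union_right

lemma connOn_univ_collapse (hconn : G.ConnOn univ) : (G.collapse S x).ConnOn univ := by
  have project : ∀ {a b}, ReflTransGen (G.AdjOn univ) a b →
      ReflTransGen ((G.collapse S x).AdjOn univ) (G.collapseMap S x a) (G.collapseMap S x b) := by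
    intro a b hab
    induction hab with
    | refl => exact .refl
    | @tail b c _ hbc ih =>
      obtain ⟨f, -, hends⟩ := hbc
      by_cases hf : f ∈ S
      · have hb : G.collapseMap S x b = x := collapseMap_of_mem (by
          rcases hends with ⟨rfl, -⟩ | ⟨-, rfl⟩
          exacts [src_mem_verts hf, tgt_mem_verts hf])
        have hc : G.collapseMap S x c = x := collapseMap_of_mem (by
          rcases hends with ⟨-, rfl⟩ | ⟨rfl, -⟩
          exacts [tgt_mem_verts hf, src_mem_verts hf])
        rw [hb] at ih
        rwa [hc]
      · refine ih.tail ⟨⟨f, hf⟩, trivial, ?_⟩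
        rcases hends with ⟨rfl, rfl⟩ | ⟨rfl, rfl⟩
        exacts [.inl ⟨rfl, rfl⟩, .inr ⟨rfl, rfl⟩]
  intro v hv w hw
  rw [verts_collapse] at hv hw
  obtain ⟨u, hu, rfl⟩ := hv
  obtain ⟨w, hw, rfl⟩ := hw
  exact project (hconn u (verts_mono (subset_univ _) hu) w (verts_mono (subset_univ _) hw))

/-- Paths between vertices of `Sᶜ` may be rerouted around `S`, which they can enter and leave
only through the single shared vertex. -/
lemma connOn_compl (hconn : G.ConnOn univ) (hSne : S.Nonempty)
    (hshared : (G.verts S ∩ G.verts Sᶜ).Subsingleton) : G.ConnOn Sᶜ := by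
  have hx : G.src hSne.some ∈ G.verts S := src_mem_verts hSne.some_mem
  refine connOn_of_collapse (x := G.src hSne.some) (S' := univ) (connOn_univ_collapse hconn)
    (by rintro _ ⟨e, -, rfl⟩; exact e.2) ?_
    fun u hu w hw h => collapseMap_injOn hx (inter_comm _ _ ▸ hshared) hu hw h ▸ .refl
  intro u hu
  rw [verts_collapse_univ]
  exact mem_image_of_mem _ hu

lemma root_mem_verts_collapse (hconn : G.ConnOn univ) (hSne : S.Nonempty) (hSu : S ≠ univ) :
    x ∈ (G.collapse S x).verts univ := by
  obtain ⟨f, hf⟩ := (ne_univ_iff_exists_notMem S).1 hSu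
  obtain ⟨e, he, htouch⟩ :=
    exists_mem_diff_touches hconn (subset_univ S) hSne ⟨f, trivial, hf⟩
  exact ⟨⟨e, he.2⟩, trivial, htouch.imp collapseMap_of_mem collapseMap_of_mem⟩

lemma exists_touches_eq_of_isLeaf_collapse (hx : x ∈ G.verts S)
    (hleaf : (G.collapse S x).IsLeaf x) :
    ∃ e₀, ∀ f ∉ S, G.Touches (G.verts S) f → f = e₀ := by
  obtain ⟨e₀, he₀⟩ := ncard_eq_one.1 hleaf
  refine ⟨e₀.1, fun f hf htouch => ?_⟩
  have : (⟨f, hf⟩ : (G.collapse S x).E) ∈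
      {e | (G.collapse S x).src e = x ∨ (G.collapse S x).tgt e = x} :=
    (collapse_touches_root_iff hx _).2 htouch
  rw [he₀] at this
  exact congrArg Subtype.val (mem_singleton_iff.1 this)

lemma IsAcyclic.collapse [Finite G.V] [Finite G.E] (hG : G.IsAcyclic) (hSne : S.Nonempty)
    (hS : G.ConnOn S) (hx : x ∈ G.verts S) : (G.collapse S x).IsAcyclic := by
  intro S' hne hconn
  -- counted in `G.V`, which is the quotient's vertex type only up to unfolding
  show @ncard G.V ((G.collapse S x).verts S') = S'.ncard + 1
  have hcard : (Subtype.val '' S').ncard = S'.ncard :=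
    ncard_image_of_injective _ Subtype.val_injective
  have hne' : (Subtype.val '' S').Nonempty := hne.image _
  by_cases hxS' : x ∈ (G.collapse S x).verts S'
  · have hT := connOn_union_of_collapse hx hS hconn hxS'
    have hverts : (G.collapse S x).verts S' =
        G.collapseMap S x '' G.verts (Subtype.val '' S' ∪ S) := by
      refine Subset.antisymm ?_ (mapsTo_collapseMap_verts_union hxS').image_subset
      rw [verts_collapse]
      exact image_mono (verts_mono subset_union_left)
    have hdisj : Disjoint (Subtype.val '' S') S :=
      disjoint_left.2 fun _ ⟨e, _, he⟩ hS => e.2 (he ▸ hS)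
    have := ncard_image_collapseMap hx (verts_mono (subset_union_right (s := Subtype.val '' S')))
    rw [← hverts, hG _ (hne'.mono subset_union_left) hT, ncard_union_eq hdisj, hcard,
      hG S hSne hS] at this
    omega
  · have hid : EqOn (G.collapseMap S x) id (G.verts (Subtype.val '' S')) := fun u hu =>
      collapseMap_of_notMem fun huS => hxS' (by
        rw [verts_collapse]
        exact ⟨u, hu, collapseMap_of_mem huS⟩)
    have hverts : (G.collapse S x).verts S' = G.verts (Subtype.val '' S') := by
      rw [verts_collapse]
      exact hid.image_eq_self
    have hT : G.ConnOn (Subtype.val '' S') := by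
      refine connOn_of_collapse hconn subset_rfl (fun u hu => ?_) fun u hu w hw h => ?_
      · rw [hverts, hid hu]
        exact hu
      · obtain rfl : u = w := (hid hu).symm.trans (h.trans (hid hw))
        exact .refl
    rw [hverts]
    exact (hG _ hne' hT).trans (congrArg (· + 1) hcard)

lemma IsAcyclic.exists_root [Finite G.E] (hA : G.IsAcyclic) (hS : G.IsSubLOT S) :
    ∃ x ∈ G.verts S, ∀ e ∈ S, G.lab e ≠ x := by
  by_contra! h
  have hsub : G.verts S ⊆ G.lab '' S := fun v hv =>
    let ⟨e, he, hlab⟩ := h v hv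
    ⟨e, he, hlab⟩
  have := (ncard_le_ncard hsub).trans (ncard_image_le (toFinite S))
  rw [hA S hS.nonempty hS.connOn] at this
  omega

lemma IsAcyclic.image_lab [Finite G.V] (hA : G.IsAcyclic) (hI : G.Inj) (hS : G.IsSubLOT S)
    (hx : x ∈ G.verts S) (hxlab : ∀ e ∈ S, G.lab e ≠ x) :
    G.lab '' S = G.verts S \ {x} := by
  refine eq_of_subset_of_ncard_le
    (image_subset_iff.2 fun e he => ⟨hS.lab_mem_verts he, hxlab e he⟩) ?_
  have := ncard_sdiff_singleton_add_one hx
  rw [InjOn.ncard_image fun e _ e' _ h => hI e e' h]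
  rw [hA S hS.nonempty hS.connOn] at this
  omega

lemma IsAcyclic.lab_eq_root [Finite G.V] (hA : G.IsAcyclic) (hI : G.Inj) (hS : G.IsSubLOT S)
    (hx : x ∈ G.verts S) (hxlab : ∀ e ∈ S, G.lab e ≠ x) {e : G.E} (he : e ∉ S)
    (hlab : G.lab e ∈ G.verts S) : G.lab e = x := by
  by_contra hne
  obtain ⟨f, hf, hfe⟩ : G.lab e ∈ G.lab '' S :=
    hA.image_lab hI hS hx hxlab ▸ ⟨hlab, hne⟩
  exact he (hI f e hfe ▸ hf)

lemma IsAcyclic.collapse_lab [Finite G.V] (hA : G.IsAcyclic) (hI : G.Inj) (hS : G.IsSubLOT S)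
    (hx : x ∈ G.verts S) (hxlab : ∀ e ∈ S, G.lab e ≠ x) (e : (G.collapse S x).E) :
    (G.collapse S x).lab e = G.lab e.1 := by
  show G.collapseMap S x (G.lab e.1) = G.lab e.1
  by_cases h : G.lab e.1 ∈ G.verts S
  · rw [collapseMap_of_mem h, hA.lab_eq_root hI hS hx hxlab e.2 h]
  · exact collapseMap_of_notMem h

end Collapse

/-- A reduced injective LOT; isolated vertices are allowed, since the quotient by a collapse keeps
all of `G.V` as its vertex type. -/
structure IsReducedInjLOT (G : LOG) : Prop where
  finite_V : Finite G.V
  finite_E : Finite G.E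
  nonempty_E : Nonempty G.E
  connOn_univ : G.ConnOn univ
  acyclic : G.IsAcyclic
  lab_mem_verts : ∀ e, G.lab e ∈ G.verts univ
  compressed : G.Compressed
  inj : G.Inj
  boundaryReduced : G.BoundaryReduced

lemma isReducedInjLOT_of_isTree (hT : G.IsTree) (hE : Nonempty G.E) (hI : G.Inj)
    (hR : G.Reduced) : G.IsReducedInjLOT where
  finite_V := hT.1
  finite_E := hT.2.1
  nonempty_E := hE
  connOn_univ := connOn_univ_of_reflTransGen_adj hT.2.2.2.1
  acyclic := isAcyclic_of_isTree hT
  lab_mem_verts _ := verts_univ_of_reflTransGen_adj hT.2.2.2.1 hE ▸ mem_univ _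
  compressed := hR.1
  inj := hI
  boundaryReduced := hR.2

namespace IsReducedInjLOT

variable {S : Set G.E} {x v : G.V}

lemma not_touches_of_lab_eq_root (hG : G.IsReducedInjLOT) (hS : G.MaxProperSubLOT S)
    (hx : x ∈ G.verts S) {e : G.E} (he : e ∉ S) (hlab : G.lab e = x) :
    ¬ G.Touches (G.verts S) e := by
  have := hG.finite_E
  obtain ⟨⟨hSne, hSconn, hSlab⟩, -⟩ := hS.1
  intro htouch
  have hsub : G.IsSubLOT (insert e S) := by
    refine ⟨insert_nonempty e S, connOn_insert hSconn htouch, ?_⟩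
    rintro f (rfl | hf)
    · exact verts_mono (subset_insert _ _) (hlab ▸ hx)
    · exact verts_mono (subset_insert _ _) (hSlab f hf)
  have hmem : ∀ f, f = e ∨ f ∈ S := by
    by_contra! h
    obtain ⟨f, hfe, hfS⟩ := h
    have := hS.2 _ ⟨hsub, fun hu => ?_⟩ (subset_insert e S)
    · exact he (this ▸ mem_insert e S)
    · exact (hu ▸ mem_univ f : f ∈ insert e S).elim hfe hfS
  -- the endpoint of `e` outside `S` is then a leaf, so it is a label, which is impossible
  obtain ⟨b, hb, hbe⟩ : ∃ b ∉ G.verts S, G.src e = b ∨ G.tgt e = b := by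
    rcases htouch with h | h
    · exact ⟨_, hG.acyclic.tgt_notMem_verts hSne hSconn he h, .inr rfl⟩
    · exact ⟨_, fun h' => hG.acyclic.tgt_notMem_verts hSne hSconn he h' h, .inl rfl⟩
  have hleaf : G.IsLeaf b := by
    have hinc : {f | G.src f = b ∨ G.tgt f = b} = {e} := by
      ext f
      refine ⟨fun hf => (hmem f).resolve_right fun hfS => hb ?_, fun hf => hf ▸ hbe⟩
      rcases hf with rfl | rfl
      exacts [src_mem_verts hfS, tgt_mem_verts hfS]
    rw [IsLeaf, hinc, ncard_singleton]
  obtain ⟨f, rfl⟩ := hG.boundaryReduced b hleaf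
  rcases hmem f with rfl | hfS
  exacts [hb (hlab ▸ hx), hb (hSlab f hfS)]

lemma compressed_collapse (hG : G.IsReducedInjLOT) (hS : G.MaxProperSubLOT S)
    (hx : x ∈ G.verts S) (hxlab : ∀ e ∈ S, G.lab e ≠ x) : (G.collapse S x).Compressed := by
  have := hG.finite_V
  intro e
  rw [hG.acyclic.collapse_lab hG.inj hS.isSubLOT hx hxlab]
  have key : ∀ u, G.lab e.1 ≠ u → (u ∈ G.verts S → G.Touches (G.verts S) e.1) →
      G.lab e.1 ≠ G.collapseMap S x u := by
    intro u hu htouch h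
    by_cases huS : u ∈ G.verts S
    · rw [collapseMap_of_mem huS] at h
      exact hG.not_touches_of_lab_eq_root hS hx e.2 h (htouch huS)
    · rw [collapseMap_of_notMem huS] at h
      exact hu h
  exact ⟨key _ (hG.compressed e.1).1 .inl, key _ (hG.compressed e.1).2 .inr⟩

lemma collapse (hG : G.IsReducedInjLOT) (hS : G.MaxProperSubLOT S) (hx : x ∈ G.verts S)
    (hxlab : ∀ e ∈ S, G.lab e ≠ x) (hbr : (G.collapse S x).BoundaryReduced) :
    (G.collapse S x).IsReducedInjLOT := by
  have := hG.finite_V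
  have := hG.finite_E
  obtain ⟨⟨hSne, hSconn, -⟩, hSu⟩ := hS.1
  have hlab := hG.acyclic.collapse_lab hG.inj hS.isSubLOT hx hxlab
  refine ⟨hG.finite_V, Subtype.finite, ?_, connOn_univ_collapse hG.connOn_univ,
    hG.acyclic.collapse hSne hSconn hx, fun e => ?_, hG.compressed_collapse hS hx hxlab,
    fun e e' h => Subtype.ext (hG.inj _ _ (by rwa [hlab, hlab] at h)), hbr⟩
  · obtain ⟨e, he⟩ := (ne_univ_iff_exists_notMem S).1 hSu
    exact ⟨⟨e, he⟩⟩
  · rw [hlab]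
    by_cases h : G.lab e.1 ∈ G.verts S
    · rw [hG.acyclic.lab_eq_root hG.inj hS.isSubLOT hx hxlab e.2 h]
      exact root_mem_verts_collapse hG.connOn_univ hSne hSu
    · rw [verts_collapse_univ]
      exact ⟨_, mem_verts_compl_of_notMem (hG.lab_mem_verts e.1) h, collapseMap_of_notMem h⟩

/-- A proper sub-LOT of the quotient through the root would lift, together with `S`, to a proper
sub-LOT of `G` strictly containing `S`. -/
lemma root_notMem_verts_of_properSubLOT_collapse (hG : G.IsReducedInjLOT)
    (hS : G.MaxProperSubLOT S) (hx : x ∈ G.verts S) (hxlab : ∀ e ∈ S, G.lab e ≠ x)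
    {S' : Set (G.collapse S x).E} (hS' : (G.collapse S x).ProperSubLOT S') :
    x ∉ (G.collapse S x).verts S' := by
  have := hG.finite_V
  obtain ⟨⟨hne, hconn, hlab⟩, hS'u⟩ := hS'
  intro hxS'
  have hT : G.IsSubLOT (Subtype.val '' S' ∪ S) := by
    refine ⟨hS.isSubLOT.nonempty.mono subset_union_right,
      connOn_union_of_collapse hx hS.isSubLOT.connOn hconn hxS', ?_⟩
    rintro _ (⟨e, he, rfl⟩ | hf)
    · exact Eq.subst (motive := (· ∈ G.verts (Subtype.val '' S' ∪ S)))
        (hG.acyclic.collapse_lab hG.inj hS.isSubLOT hx hxlab e)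
        (verts_collapse_subset hx S' (hlab e he))
    · exact verts_mono subset_union_right (hS.isSubLOT.lab_mem_verts hf)
  have hTu : Subtype.val '' S' ∪ S ≠ univ := by
    obtain ⟨f, hf⟩ := (ne_univ_iff_exists_notMem S').1 hS'u
    intro hTu
    have hf' : f.1 ∈ Subtype.val '' S' ∪ S := by rw [hTu]; trivial
    rcases hf' with ⟨e, he, hef⟩ | hfS
    · exact hf (Subtype.ext hef ▸ he)
    · exact f.2 hfS
  obtain ⟨e, he⟩ := hne
  have hST := hS.2 _ ⟨hT, hTu⟩ subset_union_right
  exact e.2 (hST.symm.subset (.inl ⟨e, he, rfl⟩))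

lemma not_freelyDecomposes_collapse (hG : G.IsReducedInjLOT) (hS : G.MaxProperSubLOT S)
    (hx : x ∈ G.verts S) (hxlab : ∀ e ∈ S, G.lab e ≠ x) :
    ¬ (G.collapse S x).FreelyDecomposes := by
  rintro ⟨SL, SR, -, hSL, hSR, hunion, -⟩
  obtain ⟨e, -, he⟩ :=
    root_mem_verts_collapse (x := x) hG.connOn_univ hS.isSubLOT.nonempty hS.ne_univ
  rcases (hunion ▸ mem_univ e : e ∈ SL ∪ SR) with h | h
  exacts [hG.root_notMem_verts_of_properSubLOT_collapse hS hx hxlab hSL ⟨e, h, he⟩,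
    hG.root_notMem_verts_of_properSubLOT_collapse hS hx hxlab hSR ⟨e, h, he⟩]

lemma eq_root_of_isLeaf_collapse (hG : G.IsReducedInjLOT) (hS : G.IsSubLOT S)
    (hx : x ∈ G.verts S) (hxlab : ∀ e ∈ S, G.lab e ≠ x)
    (hleaf : (G.collapse S x).IsLeaf v) (hnolab : ∀ e, (G.collapse S x).lab e ≠ v) : v = x := by
  have := hG.finite_V
  by_contra hvx
  have hinc : {e : (G.collapse S x).E | (G.collapse S x).src e = v ∨ (G.collapse S x).tgt e = v} =
      Subtype.val ⁻¹' {f | (G.src f = v ∨ G.tgt f = v) ∧ v ∉ G.verts S} := by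
    ext e
    exact (or_congr (collapseMap_eq_iff_of_ne_root hvx) (collapseMap_eq_iff_of_ne_root hvx)).trans
      or_and_right.symm
  unfold IsLeaf at hleaf
  rw [hinc] at hleaf
  by_cases hvS : v ∈ G.verts S
  · simp only [hvS, not_true_eq_false, and_false, ofPred_false, preimage_empty] at hleaf
    exact zero_ne_one ((ncard_empty _).symm.trans hleaf)
  · have hrange : {f | G.src f = v ∨ G.tgt f = v} ⊆
        range (Subtype.val : (G.collapse S x).E → G.E) := by
      intro f hf
      refine ⟨⟨f, fun hfS => hvS ?_⟩, rfl⟩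
      rcases hf with rfl | rfl
      exacts [src_mem_verts hfS, tgt_mem_verts hfS]
    have hGleaf : G.IsLeaf v := by
      simp only [hvS, not_false_eq_true, and_true] at hleaf
      exact (ncard_preimage_of_injective_subset_range Subtype.val_injective hrange).symm.trans hleaf
    obtain ⟨f, hf⟩ := hG.boundaryReduced v hGleaf
    have hfS : f ∉ S := fun hfS => hvS (hf ▸ hS.lab_mem_verts hfS)
    exact hnolab ⟨f, hfS⟩ ((hG.acyclic.collapse_lab hG.inj hS hx hxlab _).trans hf)

lemma freelyDecomposes_of_not_boundaryReduced_collapse (hG : G.IsReducedInjLOT)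
    (hS : G.MaxProperSubLOT S) (hx : x ∈ G.verts S) (hxlab : ∀ e ∈ S, G.lab e ≠ x)
    (hbr : ¬ (G.collapse S x).BoundaryReduced) : G.FreelyDecomposes := by
  have := hG.finite_V
  have := hG.finite_E
  obtain ⟨⟨hSne, hSconn, -⟩, hSu⟩ := hS.1
  obtain ⟨v, hleaf, hnolab⟩ :
      ∃ v, (G.collapse S x).IsLeaf v ∧ ∀ e, (G.collapse S x).lab e ≠ v := by
    simpa [BoundaryReduced] using hbr
  have hvx := hG.eq_root_of_isLeaf_collapse hS.isSubLOT hx hxlab hleaf hnolab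
  subst v
  have hlab : ∀ f ∉ S, G.lab f ∉ G.verts S := fun f hf hmem => hnolab ⟨f, hf⟩
    ((hG.acyclic.collapse_lab hG.inj hS.isSubLOT hx hxlab _).trans
      (hG.acyclic.lab_eq_root hG.inj hS.isSubLOT hx hxlab hf hmem))
  obtain ⟨w, hw⟩ := hG.acyclic.verts_inter_verts_compl_eq_singleton hG.connOn_univ hSne hSconn
    hSu (exists_touches_eq_of_isLeaf_collapse hx hleaf)
  have hconn := connOn_compl hG.connOn_univ hSne (hw ▸ subsingleton_singleton)
  exact freelyDecomposes_of_compl hS.1 (isSubLOT_compl hG.lab_mem_verts hSu hconn hlab) hw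

theorem hasCompleteSet_or_freelyDecomposes {G : LOG} (hG : G.IsReducedInjLOT) :
    HasCompleteSet G ∨ G.FreelyDecomposes := by
  have := hG.finite_V
  have := hG.finite_E
  by_cases hp : G.Prime
  · exact .inl ⟨G, .refl G, hG.nonempty_E, hG.compressed, hp⟩
  obtain ⟨S, hS⟩ := exists_maxProperSubLOT hp
  obtain ⟨x, hx, hxlab⟩ := hG.acyclic.exists_root hS.isSubLOT
  by_cases hbr : (G.collapse S x).BoundaryReduced
  · have hlt : Nat.card (G.collapse S x).E < Nat.card G.E :=
      Finite.card_subtype_lt (not_not_intro hS.isSubLOT.nonempty.some_mem)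
    rcases (hG.collapse hS hx hxlab hbr).hasCompleteSet_or_freelyDecomposes with
      ⟨H, hH, hne, hc, hp⟩ | hdec
    · exact .inl ⟨H, .step G H S x hS hx hxlab hH, hne, hc, hp⟩
    · exact (hG.not_freelyDecomposes_collapse hS hx hxlab hdec).elim
  · exact .inr (hG.freelyDecomposes_of_not_boundaryReduced_collapse hS hx hxlab hbr)
termination_by Nat.card G.E
decreasing_by exact hlt

end IsReducedInjLOT

end LOG

/-- Let `Γ` be a reduced injective LOT that is not prime.  Then either
`Γ` contains a complete set of sub-LOTs, or `Γ` freely decomposes as `Γ = Γ_L ∪ Γ_R` with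
`Γ_L, Γ_R` proper sub-LOTs intersecting in a single vertex. -/
theorem complete_set_or_free_decomposition
    (G : LOG) (hT : G.IsTree) (hI : G.Inj) (hR : G.Reduced) (hnp : ¬ G.Prime) :
    HasCompleteSet G ∨ G.FreelyDecomposes := by
  obtain ⟨S, hS⟩ := not_forall_not.1 hnp
  have hG := LOG.isReducedInjLOT_of_isTree hT ⟨hS.1.nonempty.some⟩ hI hR
  exact hG.hasCompleteSet_or_freelyDecomposes
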